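/- (Cayley, even case) Let n ≥ 1 and let A be a 2n × 2n skew-symmetric matrix over ℂ (i.e. Aᵀ = −A). Define the Pfaffian of A by Pf(A) = (1/(2ⁿ · n!)) · ∑_{σ ∈ S_{2n}} sgn(σ) · ∏_{i=1}^{n} A_{σ(2i−1), σ(2i)}, where the sum runs over all permutations σ of {1,…,2n}. Then det(A) = (Pf(A))². -/

import Mathlib

/-!
Write `Pf A` for the unnormalised sum `∑_σ sgn σ ∏ᵢ A_{σ(2i-1), σ(2i)}`. Expanding the entries
of `Mᵀ A M` turns `Pf (Mᵀ A M)` into a sum over all maps `f` of `∏ᵢ A_{f(2i-1), f(2i)}` times the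
determinant of `M` with rows reindexed by `f`, which vanishes unless `f` is a permutation; hence
`Pf (Mᵀ A M) = det M * Pf A`. An invertible skew-symmetric matrix over a field of characteristic
`≠ 2` is congruent to the standard symplectic matrix `J` (split off a `2 × 2` block by a Schur
complement and induct), and `Pf J = 2ⁿ n!`: its nonzero terms come from the `2ⁿ n!` permutations
that permute the pairs and possibly swap within each pair, and each contributes `1`. Hence
`Pf A ^ 2 = (2ⁿ n!)² det A` for invertible `A`, and then for every `A`, because both sides are
polynomial along the line `A + t J`, which meets the singular matrices only finitely often.
-/

open Finset Matrix

open Equiv Equiv.Perm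

namespace Fintype

theorem prod_sum_sum_eq_sum_fun {κ α S : Type*} [Fintype κ] [DecidableEq κ] [Fintype α]
    [CommSemiring S] (F : κ → α → α → S) :
    ∏ k, ∑ a, ∑ b, F k a b = ∑ f : κ × Fin 2 → α, ∏ k, F k (f (k, 0)) (f (k, 1)) := by
  simp only [← Fintype.sum_prod_type', Fintype.prod_sum]
  exact ((Equiv.curry κ (Fin 2) α).trans
    (Equiv.arrowCongr (Equiv.refl κ) (finTwoArrowEquiv α))).sum_comp _ |>.symm

theorem sum_fun_eq_sum_perm {α M : Type*} [Fintype α] [DecidableEq α] [AddCommMonoid M]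
    (g : (α → α) → M) (hg : ∀ f, ¬Function.Injective f → g f = 0) :
    ∑ f, g f = ∑ σ : Perm α, g σ := by
  refine (Fintype.sum_of_injective _ DFunLike.coe_injective _ _ (fun f hf => hg f ?_)
    fun _ => rfl).symm
  exact fun hinj => hf ⟨Equiv.ofBijective f hinj.bijective_of_finite, rfl⟩

end Fintype

namespace Equiv.Perm

variable {α β : Type*}

theorem sign_prodShear [Fintype α] [DecidableEq α] [Fintype β] [DecidableEq β] (ρ : Perm α)
    (ε : α → Perm β) : sign (prodShear ρ ε) = sign ρ ^ Fintype.card β * ∏ a, sign (ε a) := by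
  have : prodShear ρ ε = prodCongrLeft (fun _ => ρ) * prodCongrRight ε := rfl
  rw [this, Perm.sign_mul, sign_prodCongrLeft, sign_prodCongrRight, prod_const, card_univ]

theorem prodShear_injective [Nonempty β] :
    Function.Injective fun p : Perm α × (α → Perm β) => prodShear p.1 p.2 := by
  obtain ⟨b⟩ := ‹Nonempty β›
  rintro ⟨ρ, ε⟩ ⟨ρ', ε'⟩ h
  have h' (a : α) (x : β) := congrArg (fun σ : Perm (α × β) => σ (a, x)) h
  simp only [prodShear_apply, Prod.mk.injEq] at h'
  exact Prod.ext (Equiv.ext fun a => (h' a b).1) (funext fun a => Equiv.ext fun x => (h' a x).2)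

theorem exists_prodShear_eq [Finite α] [Finite β] [Nonempty β] (σ : Perm (α × β))
    (h : ∀ a x y, (σ (a, x)).1 = (σ (a, y)).1) : ∃ ρ ε, prodShear ρ ε = σ := by
  obtain ⟨b⟩ := ‹Nonempty β›
  have hε (a : α) : Function.Bijective fun x => (σ (a, x)).2 := by
    refine Finite.injective_iff_bijective.mp fun x y hxy => ?_
    simpa using σ.injective (Prod.ext (h a x y) hxy)
  have hρ : Function.Injective fun a => (σ (a, b)).1 := by
    intro a a' haa'
    obtain ⟨x, hx⟩ := (hε a).2 (σ (a', b)).2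
    exact congrArg Prod.fst (σ.injective (Prod.ext ((h a x b).trans haa') hx))
  refine ⟨Equiv.ofBijective _ (Finite.injective_iff_bijective.mp hρ),
    fun a => Equiv.ofBijective _ (hε a), Equiv.ext fun ⟨a, x⟩ => ?_⟩
  exact Prod.ext (h a b x) rfl

theorem intCast_sign_fin_two {R : Type*} [CommRing R] (ε : Perm (Fin 2)) :
    ((sign ε : ℤ) : R) = !![0, 1; -1, 0] (ε 0) (ε 1) := by
  obtain rfl | rfl : ε = 1 ∨ ε = Equiv.swap 0 1 := by revert ε; decide
  all_goals simp

end Equiv.Perm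

def finPairEquiv {n : ℕ} : Fin n × Fin 2 ≃ Fin (2 * n) :=
  finProdFinEquiv.trans (finCongr (Nat.mul_comm n 2))

def finSuccProdEquiv {n : ℕ} : Fin 2 ⊕ Fin n × Fin 2 ≃ Fin (n + 1) × Fin 2 where
  toFun := Sum.elim (fun x => (0, x)) fun p => (p.1.succ, p.2)
  invFun p := Fin.cases (Sum.inl p.2) (fun i => Sum.inr (i, p.2)) p.1
  left_inv := by rintro (x | ⟨i, x⟩) <;> rfl
  right_inv := by rintro ⟨i, x⟩; cases i using Fin.cases <;> rfl

namespace Matrix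

open scoped Kronecker

section Semiring

variable {R : Type*} [Semiring R]

theorem transpose_mul_mul_apply {ι ο : Type*} [Fintype ι] (M : Matrix ι ο R)
    (A : Matrix ι ι R) (a b : ο) : (Mᵀ * A * M) a b = ∑ c, ∑ d, M c a * A c d * M d b := by
  simp only [mul_apply, transpose_apply, sum_mul]
  exact sum_comm

theorem submatrix_transpose_mul_mul {α β γ δ : Type*} [Fintype α] [Fintype γ]
    (N : Matrix α β R) (B : Matrix γ γ R) (s : α ≃ γ) (e : δ → β) :
    (Nᵀ * B.submatrix s s * N).submatrix e e =
      (N.submatrix s.symm e)ᵀ * B * N.submatrix s.symm e := by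
  ext x y
  simp only [submatrix_apply, transpose_mul_mul_apply]
  rw [← s.symm.sum_comp]
  refine sum_congr rfl fun c _ => ?_
  rw [← s.symm.sum_comp]
  simp

theorem fromBlocks_transpose_mul_mul {m ι : Type*} [Fintype m] [Fintype ι]
    (N X : Matrix m m R) (Q Y : Matrix ι ι R) :
    fromBlocks (Nᵀ * X * N) 0 0 (Qᵀ * Y * Q) =
      (fromBlocks N 0 0 Q)ᵀ * fromBlocks X 0 0 Y * fromBlocks N 0 0 Q := by
  simp [fromBlocks_transpose, fromBlocks_multiply]

end Semiring

section CommRing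

variable {R : Type*} [CommRing R]

theorem exists_eq_transpose_mul_fromBlocks_mul {m ι : Type*} [Fintype m] [DecidableEq m]
    [Fintype ι] [DecidableEq ι] (A : Matrix (m ⊕ ι) (m ⊕ ι) R) (hA : Aᵀ = -A)
    (hP : IsUnit A.toBlocks₁₁.det) :
    ∃ (L : Matrix (m ⊕ ι) (m ⊕ ι) R) (S : Matrix ι ι R),
      A = Lᵀ * fromBlocks A.toBlocks₁₁ 0 0 S * L ∧ Sᵀ = -S ∧
        A.det = A.toBlocks₁₁.det * S.det := by
  let := invertibleOfIsUnitDet _ hP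
  obtain ⟨hPt, hCt, hBt, hDt⟩ : A.toBlocks₁₁ᵀ = -A.toBlocks₁₁ ∧ A.toBlocks₂₁ᵀ = -A.toBlocks₁₂ ∧
      A.toBlocks₁₂ᵀ = -A.toBlocks₂₁ ∧ A.toBlocks₂₂ᵀ = -A.toBlocks₂₂ := by
    rwa [← fromBlocks_toBlocks A, fromBlocks_transpose, fromBlocks_neg, fromBlocks_inj] at hA
  have hinv : A.toBlocks₁₁⁻¹ᵀ = -A.toBlocks₁₁⁻¹ := by
    rw [transpose_nonsing_inv, hPt]
    exact inv_eq_left_inv (by rw [neg_mul_neg, nonsing_inv_mul _ hP])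
  refine ⟨fromBlocks 1 (A.toBlocks₁₁⁻¹ * A.toBlocks₁₂) 0 1,
    A.toBlocks₂₂ - A.toBlocks₂₁ * A.toBlocks₁₁⁻¹ * A.toBlocks₁₂, ?_, ?_, ?_⟩
  · conv_lhs => rw [← fromBlocks_toBlocks A, fromBlocks_eq_of_invertible₁₁]
    simp [fromBlocks_transpose, transpose_mul, hinv, hBt]
  · simp only [transpose_sub, transpose_mul, hinv, hCt, hBt, hDt, Matrix.mul_assoc,
      Matrix.neg_mul, Matrix.mul_neg, neg_neg]
    abel
  · rw [← invOf_eq_nonsing_inv, ← det_fromBlocks₁₁, fromBlocks_toBlocks]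

/-- The Pfaffian without its normalising factor `1 / (2ⁿ n!)`, for a matrix indexed by pairs
`(k, x)`: the pair `{(k, 0), (k, 1)}` plays the role of `{2k - 1, 2k}`. -/
def pfaffianSum {κ : Type*} [Fintype κ] [DecidableEq κ] (A : Matrix (κ × Fin 2) (κ × Fin 2) R) :
    R :=
  ∑ σ : Perm (κ × Fin 2), ((sign σ : ℤ) : R) * ∏ k, A (σ (k, 0)) (σ (k, 1))

def standardSymplectic (κ R : Type*) [DecidableEq κ] [CommRing R] :
    Matrix (κ × Fin 2) (κ × Fin 2) R :=
  (1 : Matrix κ κ R) ⊗ₖ !![0, 1; -1, 0]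

theorem standardSymplectic_transpose {κ : Type*} [DecidableEq κ] :
    (standardSymplectic κ R)ᵀ = -standardSymplectic κ R := by
  ext ⟨k, x⟩ ⟨l, y⟩
  fin_cases x <;> fin_cases y <;> simp [standardSymplectic, one_apply, eq_comm]

theorem standardSymplectic_submatrix_finSuccProdEquiv (n : ℕ) :
    (standardSymplectic (Fin (n + 1)) R).submatrix finSuccProdEquiv finSuccProdEquiv =
      fromBlocks !![0, 1; -1, 0] 0 0 (standardSymplectic (Fin n) R) := by
  ext (x | ⟨i, x⟩) (y | ⟨j, y⟩) <;>
    simp [standardSymplectic, finSuccProdEquiv, one_apply, Fin.succ_ne_zero, eq_comm]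

variable {κ : Type*} [Fintype κ] [DecidableEq κ]

theorem det_standardSymplectic : (standardSymplectic κ R).det = 1 := by
  simp [standardSymplectic, det_kronecker, det_fin_two_of]

theorem map_pfaffianSum {S : Type*} [CommRing S] (f : R →+* S)
    (A : Matrix (κ × Fin 2) (κ × Fin 2) R) : f (pfaffianSum A) = pfaffianSum (f.mapMatrix A) := by
  simp [pfaffianSum, map_sum, map_prod]

theorem pfaffianSum_transpose_mul_mul (M A : Matrix (κ × Fin 2) (κ × Fin 2) R) :
    pfaffianSum (Mᵀ * A * M) = M.det * pfaffianSum A := by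
  have hexpand (σ : Perm (κ × Fin 2)) : ∏ k, (Mᵀ * A * M) (σ (k, 0)) (σ (k, 1)) =
      ∑ f : κ × Fin 2 → κ × Fin 2, (∏ k, A (f (k, 0)) (f (k, 1))) * ∏ p, M (f p) (σ p) := by
    simp only [transpose_mul_mul_apply, Fintype.prod_sum_sum_eq_sum_fun, Fintype.prod_prod_type,
      Fin.prod_univ_two, ← prod_mul_distrib]
    exact sum_congr rfl fun f _ => prod_congr rfl fun k _ => by ring
  have hdet (f : κ × Fin 2 → κ × Fin 2) :
      ∑ σ : Perm (κ × Fin 2), ((sign σ : ℤ) : R) * ∏ p, M (f p) (σ p) =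
        (M.submatrix f id).det := by
    rw [← det_transpose, det_apply']
    rfl
  calc pfaffianSum (Mᵀ * A * M)
      = ∑ f : κ × Fin 2 → κ × Fin 2, (∏ k, A (f (k, 0)) (f (k, 1))) * (M.submatrix f id).det := by
        simp only [pfaffianSum, hexpand, mul_sum, ← hdet]
        rw [sum_comm]
        exact sum_congr rfl fun f _ => sum_congr rfl fun σ _ => by ring
    _ = ∑ τ : Perm (κ × Fin 2), (∏ k, A (τ (k, 0)) (τ (k, 1))) * (M.submatrix τ id).det := by
        refine Fintype.sum_fun_eq_sum_perm _ fun f hf => ?_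
        obtain ⟨p, q, hpq, hne⟩ := Function.not_injective_iff.mp hf
        rw [det_zero_of_row_eq hne (funext fun j => by simp [hpq]), mul_zero]
    _ = M.det * pfaffianSum A := by
        simp only [det_permute, pfaffianSum, mul_sum]
        exact sum_congr rfl fun τ _ => by ring

theorem pfaffianSum_standardSymplectic :
    pfaffianSum (standardSymplectic κ R) = 2 ^ Fintype.card κ * (Fintype.card κ).factorial := by
  set J := standardSymplectic κ R
  have hJ (k l : κ) (x y : Fin 2) :
      J (k, x) (l, y) = (1 : Matrix κ κ R) k l * !![0, 1; -1, 0] x y := rfl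
  have hshear (ρ : Perm κ) (ε : κ → Perm (Fin 2)) :
      ((sign (prodShear ρ ε) : ℤ) : R) * ∏ k, J (prodShear ρ ε (k, 0)) (prodShear ρ ε (k, 1))
        = 1 := by
    simp only [prodShear_apply, hJ, one_apply_eq, one_mul, ← intCast_sign_fin_two,
      sign_prodShear, Fintype.card_fin, Int.units_sq, one_mul]
    push_cast
    rw [← prod_mul_distrib]
    refine prod_eq_one fun k _ => ?_
    rw [← Int.cast_mul, ← Units.val_mul, Int.units_mul_self, Units.val_one, Int.cast_one]
  have hsupport (σ : Perm (κ × Fin 2))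
      (hσ : ((sign σ : ℤ) : R) * ∏ k, J (σ (k, 0)) (σ (k, 1)) ≠ 0) :
      σ ∈ Set.range fun p : Perm κ × (κ → Perm (Fin 2)) => prodShear p.1 p.2 := by
    have hfst (k : κ) : (σ (k, 0)).1 = (σ (k, 1)).1 := by
      by_contra hne
      refine hσ (mul_eq_zero_of_right _ (prod_eq_zero (mem_univ k) ?_))
      rw [← Prod.mk.eta (p := σ (k, 0)), ← Prod.mk.eta (p := σ (k, 1)), hJ, one_apply_ne hne,
        zero_mul]
    obtain ⟨ρ, ε, h⟩ := exists_prodShear_eq σ fun k x y => by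
      fin_cases x <;> fin_cases y <;> simp [hfst k]
    exact ⟨(ρ, ε), h⟩
  calc pfaffianSum J = ∑ _p : Perm κ × (κ → Perm (Fin 2)), (1 : R) :=
        (Fintype.sum_of_injective _ prodShear_injective _ _
          (fun σ hσ => not_not.mp (mt (hsupport σ) hσ)) fun p => (hshear p.1 p.2).symm).symm
    _ = 2 ^ Fintype.card κ * (Fintype.card κ).factorial := by
        simp [Fintype.card_perm, mul_comm]

theorem sum_sign_mul_prod_eq_pfaffianSum {n : ℕ} (A : Matrix (Fin (2 * n)) (Fin (2 * n)) R) :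
    ∑ σ : Perm (Fin (2 * n)), ((sign σ : ℤ) : R) *
        ∏ i : Fin n, A (σ ⟨2 * i.1, by omega⟩) (σ ⟨2 * i.1 + 1, by omega⟩) =
      pfaffianSum (A.submatrix finPairEquiv finPairEquiv) := by
  refine Fintype.sum_equiv (permCongr finPairEquiv.symm) _ _ fun σ => ?_
  have h₀ (i : Fin n) : finPairEquiv (i, 0) = ⟨2 * i.1, by omega⟩ := by
    ext
    simp [finPairEquiv]
  have h₁ (i : Fin n) : finPairEquiv (i, 1) = ⟨2 * i.1 + 1, by omega⟩ := by
    ext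
    simp [finPairEquiv, add_comm]
  simp only [sign_permCongr, permCongr_apply, symm_symm, submatrix_apply, apply_symm_apply, h₀,
    h₁]

end CommRing

section Field

variable {K : Type*} [Field K]

theorem diag_eq_zero_of_transpose_eq_neg [NeZero (2 : K)] {ι : Type*} {A : Matrix ι ι K}
    (hA : Aᵀ = -A) (i : ι) : A i i = 0 := by
  have h : A i i = -A i i := congr_fun₂ hA i i
  have h2 : (2 : K) * A i i = 0 := by linear_combination h
  exact (mul_eq_zero.mp h2).resolve_left two_ne_zero

theorem eq_transpose_mul_mul_of_fin_two [NeZero (2 : K)] (P : Matrix (Fin 2) (Fin 2) K)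
    (hP : Pᵀ = -P) : P = !![1, 0; 0, P 0 1]ᵀ * !![0, 1; -1, 0] * !![1, 0; 0, P 0 1] := by
  have h₁₀ : P 1 0 = -P 0 1 := congr_fun₂ hP 0 1
  ext i j
  fin_cases i <;> fin_cases j <;>
    simp [mul_apply, Fin.sum_univ_two, diag_eq_zero_of_transpose_eq_neg hP, h₁₀]

theorem exists_eq_transpose_mul_standardSymplectic_mul [NeZero (2 : K)] {n : ℕ}
    (A : Matrix (Fin n × Fin 2) (Fin n × Fin 2) K) (hA : Aᵀ = -A) (hdet : A.det ≠ 0) :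
    ∃ M, A = Mᵀ * standardSymplectic (Fin n) K * M := by
  induction n with
  | zero => exact ⟨0, Subsingleton.elim _ _⟩
  | succ n ih =>
    -- Reorder the indices so that a nonzero entry `A (0, 0) j` becomes the top-left `2 × 2` block.
    obtain ⟨j, hj⟩ : ∃ j, A (0, 0) j ≠ 0 := by
      by_contra! h
      exact hdet (det_eq_zero_of_row_eq_zero _ h)
    have hj₀ : j ≠ (0, 0) := by
      rintro rfl
      exact hj (diag_eq_zero_of_transpose_eq_neg hA _)
    let e := finSuccProdEquiv.trans (Equiv.swap (0, 1) j)
    set A' := A.submatrix e e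
    have hA' : A'ᵀ = -A' := by rw [transpose_submatrix, hA]; rfl
    set P := A'.toBlocks₁₁
    have hP : Pᵀ = -P := by ext a b; exact congr_fun₂ hA' (Sum.inl a) (Sum.inl b)
    have hP₀₁ : P 0 1 = A (0, 0) j := by
      have he₀ : e (Sum.inl 0) = (0, 0) :=
        swap_apply_of_ne_of_ne (a := ((0 : Fin (n + 1)), (1 : Fin 2))) (by simp) hj₀.symm
      have he₁ : e (Sum.inl 1) = j := swap_apply_left (0, 1) j
      simp [P, A', toBlocks₁₁, he₀, he₁]
    have hdetP : P.det = A (0, 0) j ^ 2 := by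
      rw [eq_transpose_mul_mul_of_fin_two P hP]
      simp [hP₀₁, sq]
    obtain ⟨L, S, hL, hS, hdetA'⟩ := exists_eq_transpose_mul_fromBlocks_mul A' hA'
      (isUnit_iff_ne_zero.mpr (hdetP ▸ pow_ne_zero 2 hj))
    obtain ⟨Q, rfl⟩ := ih S hS fun h => hdet (by simpa [A', h] using hdetA')
    set N := fromBlocks !![1, 0; 0, P 0 1] 0 0 Q * L
    have hA'N : A' = Nᵀ * (standardSymplectic (Fin (n + 1)) K).submatrix finSuccProdEquiv
        finSuccProdEquiv * N := by
      calc A' = Lᵀ * fromBlocks P 0 0 (Qᵀ * standardSymplectic (Fin n) K * Q) * L := hL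
        _ = Lᵀ * ((fromBlocks !![1, 0; 0, P 0 1] 0 0 Q)ᵀ *
              fromBlocks !![0, 1; -1, 0] 0 0 (standardSymplectic (Fin n) K) *
              fromBlocks !![1, 0; 0, P 0 1] 0 0 Q) * L := by
          rw [← fromBlocks_transpose_mul_mul, ← eq_transpose_mul_mul_of_fin_two P hP]
        _ = _ := by
          rw [standardSymplectic_submatrix_finSuccProdEquiv]
          simp only [N, transpose_mul, Matrix.mul_assoc]
    refine ⟨N.submatrix finSuccProdEquiv.symm e.symm, ?_⟩
    rw [← submatrix_transpose_mul_mul, ← hA'N]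
    simp [A']

theorem pfaffianSum_sq_of_det_ne_zero [NeZero (2 : K)] {n : ℕ}
    (A : Matrix (Fin n × Fin 2) (Fin n × Fin 2) K) (hA : Aᵀ = -A) (hdet : A.det ≠ 0) :
    pfaffianSum A ^ 2 = (2 ^ n * n.factorial : K) ^ 2 * A.det := by
  obtain ⟨M, rfl⟩ := exists_eq_transpose_mul_standardSymplectic_mul A hA hdet
  rw [pfaffianSum_transpose_mul_mul, pfaffianSum_standardSymplectic, det_mul, det_mul,
    det_transpose, det_standardSymplectic]
  simp only [Fintype.card_fin]
  ring

open Polynomial in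
theorem pfaffianSum_sq [CharZero K] {n : ℕ} (A : Matrix (Fin n × Fin 2) (Fin n × Fin 2) K)
    (hA : Aᵀ = -A) : pfaffianSum A ^ 2 = (2 ^ n * n.factorial : K) ^ 2 * A.det := by
  set J := standardSymplectic (Fin n) K
  set c : K := 2 ^ n * n.factorial
  let Aₓ : Matrix (Fin n × Fin 2) (Fin n × Fin 2) K[X] := (X : K[X]) • J.map C + A.map C
  have hAₓ (t : K) : (evalRingHom t).mapMatrix Aₓ = t • J + A := by
    ext
    simp [Aₓ]
    ring
  let p : K[X] := pfaffianSum Aₓ ^ 2 - C c ^ 2 * Aₓ.det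
  have hp (t : K) : p.eval t = pfaffianSum (t • J + A) ^ 2 - c ^ 2 * (t • J + A).det := by
    rw [← coe_evalRingHom]
    simp only [p, map_sub, map_pow, map_mul, map_pfaffianSum, RingHom.map_det, hAₓ]
    simp
  have hdet : Aₓ.det ≠ 0 := fun h => by
    have h₁ : Aₓ.det.coeff (Fintype.card (Fin n × Fin 2)) = 1 :=
      (coeff_det_X_add_C_card J A).trans det_standardSymplectic
    simp [h] at h₁
  have hroots : {t | ¬Aₓ.det.IsRoot t} ⊆ {t | p.IsRoot t} := fun t ht => by
    have hskew : (t • J + A)ᵀ = -(t • J + A) := by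
      rw [transpose_add, transpose_smul, standardSymplectic_transpose, hA, smul_neg, neg_add]
    have hdet_t : (t • J + A).det ≠ 0 := by
      rwa [← hAₓ, ← RingHom.map_det]
    change p.eval t = 0
    rw [hp, pfaffianSum_sq_of_det_ne_zero _ hskew hdet_t, sub_self]
  have hp₀ : p = 0 :=
    eq_zero_of_infinite_isRoot p (((finite_setOfPred_isRoot hdet).infinite_compl).mono hroots)
  have h₀ := hp 0
  rwa [hp₀, eval_zero, zero_smul, zero_add, eq_comm, sub_eq_zero] at h₀

end Field

end Matrix

/-- Cayley's theorem, even case: the determinant of a `2n × 2n` skew-symmetric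
complex matrix is the square of its Pfaffian, where the Pfaffian is given by
`Pf(A) = (1/(2^n n!)) ∑_{σ ∈ S_{2n}} sgn(σ) ∏_{i=1}^{n} A_{σ(2i-1), σ(2i)}`. -/
theorem det_skew_eq_pfaffian_sq (n : ℕ)
    (A : Matrix (Fin (2 * n)) (Fin (2 * n)) ℂ) (hA : Aᵀ = -A) :
    A.det =
      ((1 / (2 ^ n * (n.factorial : ℂ))) *
        ∑ σ : Equiv.Perm (Fin (2 * n)), ((Equiv.Perm.sign σ : ℤ) : ℂ) *
          ∏ i : Fin n,
            A (σ ⟨2 * i.1, by have := i.isLt; omega⟩)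
              (σ ⟨2 * i.1 + 1, by have := i.isLt; omega⟩)) ^ 2 := by
  have hA' : (A.submatrix finPairEquiv finPairEquiv)ᵀ = -A.submatrix finPairEquiv finPairEquiv := by
    rw [transpose_submatrix, hA]
    rfl
  have hsq := pfaffianSum_sq _ hA'
  rw [det_submatrix_equiv_self] at hsq
  have hfact : (n.factorial : ℂ) ≠ 0 := Nat.cast_ne_zero.mpr n.factorial_ne_zero
  rw [sum_sign_mul_prod_eq_pfaffianSum, mul_pow, hsq]
  field_simp
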